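/- Let A be a densely defined symmetric operator in a complex Hilbert space H, and suppose C : H → H is a conjugation (an antilinear, norm-preserving map with C² = I) satisfying C·dom(A) ⊆ dom(A) and A C f = C A f for all f ∈ dom(A). Then the deficiency indices of A are equal: n₊(A) = n₋(A), i.e., dim ker(A* − iI) = dim ker(A* + iI). -/
import Mathlib


open scoped InnerProductSpace LinearPMap

/-- If a densely defined symmetric operator `A` commutes with a conjugation `C`
(an antilinear, norm-preserving map with `C² = I`) leaving its domain invariant,
then the deficiency indices of `A` are equal:
`dim ker(A* − iI) = dim ker(A* + iI)`. -/
theorem deficiency_indices_equal_of_conjugation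
    {H : Type*} [NormedAddCommGroup H] [InnerProductSpace ℂ H] [CompleteSpace H]
    (A : H →ₗ.[ℂ] H) (hdense : Dense (A.domain : Set H))
    (hsym : ∀ f g : A.domain, ⟪A f, (g : H)⟫_ℂ = ⟪(f : H), A g⟫_ℂ)
    (C : H →ₗ⋆[ℂ] H) (hCnorm : ∀ f, ‖C f‖ = ‖f‖) (hC2 : ∀ f, C (C f) = f)
    (hCdom : ∀ f, f ∈ A.domain → C f ∈ A.domain)
    (hAC : ∀ f (hf : f ∈ A.domain), A ⟨C f, hCdom f hf⟩ = C (A ⟨f, hf⟩)) :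
    Module.rank ℂ
        ↥(LinearMap.ker ((A†).toFun - Complex.I • (A†).domain.subtype)) =
      Module.rank ℂ
        ↥(LinearMap.ker ((A†).toFun + Complex.I • (A†).domain.subtype)) := by
  -- C is "anti-unitary": ⟪C u, C v⟫ = ⟪v, u⟫
  have hCinner : ∀ u v : H, ⟪C u, C v⟫_ℂ = ⟪v, u⟫_ℂ := by
    intro u v
    have h1 : ‖C u + C v‖ = ‖v + u‖ := by
      rw [← map_add, hCnorm, add_comm]
    have h2 : ‖C u - C v‖ = ‖v - u‖ := by
      rw [← map_sub, hCnorm, norm_sub_rev]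
    have h3 : ‖C u - Complex.I • C v‖ = ‖v - Complex.I • u‖ := by
      have e : C u - Complex.I • C v = C (u + Complex.I • v) := by
        rw [map_add, LinearMap.map_smulₛₗ]
        simp [Complex.conj_I, sub_eq_add_neg]
      rw [e, hCnorm]
      have e2 : Complex.I • (u + Complex.I • v) = -(v - Complex.I • u) := by
        rw [smul_add, smul_smul, Complex.I_mul_I]
        simp [sub_eq_add_neg, add_comm]
      calc ‖u + Complex.I • v‖ = ‖Complex.I • (u + Complex.I • v)‖ := by
            rw [norm_smul, Complex.norm_I, one_mul]
        _ = ‖v - Complex.I • u‖ := by rw [e2, norm_neg]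
    have h4 : ‖C u + Complex.I • C v‖ = ‖v + Complex.I • u‖ := by
      have e : C u + Complex.I • C v = C (u - Complex.I • v) := by
        rw [map_sub, LinearMap.map_smulₛₗ]
        simp [Complex.conj_I, sub_eq_add_neg]
      rw [e, hCnorm]
      have e2 : Complex.I • (u - Complex.I • v) = v + Complex.I • u := by
        rw [smul_sub, smul_smul, Complex.I_mul_I]
        simp [sub_eq_add_neg, add_comm]
      calc ‖u - Complex.I • v‖ = ‖Complex.I • (u - Complex.I • v)‖ := by
            rw [norm_smul, Complex.norm_I, one_mul]
        _ = ‖v + Complex.I • u‖ := by rw [e2]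
    rw [inner_eq_sum_norm_sq_div_four, inner_eq_sum_norm_sq_div_four v u]
    have hIK : (RCLike.I : ℂ) = Complex.I := rfl
    rw [hIK, h1, h2, h3, h4]
  -- the formal adjoint property
  have hadj := LinearPMap.adjoint_isFormalAdjoint hdense
  -- the key calculation: ⟪C (A† y), x⟫ = ⟪C y, A x⟫ for x ∈ dom A
  have key : ∀ (y : (A†).domain) (x : A.domain),
      ⟪C ((A†) y), (x : H)⟫_ℂ = ⟪C (y : H), A x⟫_ℂ := by
    intro y x
    calc ⟪C ((A†) y), (x : H)⟫_ℂ = ⟪C ((A†) y), C (C (x : H))⟫_ℂ := by rw [hC2]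
      _ = ⟪C (x : H), (A†) y⟫_ℂ := hCinner _ _
      _ = (starRingEnd ℂ) ⟪(A†) y, C (x : H)⟫_ℂ := (inner_conj_symm _ _).symm
      _ = (starRingEnd ℂ) ⟪(y : H), A ⟨C (x : H), hCdom x x.2⟩⟫_ℂ := by
            rw [hadj y ⟨C (x : H), hCdom x x.2⟩]
      _ = (starRingEnd ℂ) ⟪(y : H), C (A x)⟫_ℂ := by rw [hAC x x.2]
      _ = ⟪C (A x), (y : H)⟫_ℂ := inner_conj_symm _ _
      _ = ⟪C (A x), C (C (y : H))⟫_ℂ := by rw [hC2]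
      _ = ⟪C (y : H), A x⟫_ℂ := hCinner _ _
  have hmem : ∀ y : (A†).domain, C (y : H) ∈ (A†).domain := fun y =>
    LinearPMap.mem_adjoint_domain_of_exists _ ⟨C ((A†) y), key y⟩
  have hval : ∀ y : (A†).domain, (A†) ⟨C (y : H), hmem y⟩ = C ((A†) y) := fun y =>
    LinearPMap.adjoint_apply_eq hdense _ (key y)
  -- abbreviations for the two kernels
  set Kp := LinearMap.ker ((A†).toFun - Complex.I • (A†).domain.subtype) with hKp
  set Km := LinearMap.ker ((A†).toFun + Complex.I • (A†).domain.subtype) with hKm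
  have memKp : ∀ y : (A†).domain, y ∈ Kp ↔ (A†) y = Complex.I • (y : H) := by
    intro y
    rw [hKp, LinearMap.mem_ker, LinearMap.sub_apply, LinearMap.smul_apply,
      sub_eq_zero]
    rfl
  have memKm : ∀ y : (A†).domain, y ∈ Km ↔ (A†) y = -(Complex.I • (y : H)) := by
    intro y
    rw [hKm, LinearMap.mem_ker, LinearMap.add_apply, LinearMap.smul_apply,
      add_eq_zero_iff_eq_neg]
    rfl
  -- C maps Kp into Km and vice versa
  have fwd : ∀ y : (A†).domain, y ∈ Kp → (⟨C (y : H), hmem y⟩ : (A†).domain) ∈ Km := by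
    intro y hy
    rw [memKm]
    show (A†) ⟨C (y : H), hmem y⟩ = -(Complex.I • C (y : H))
    rw [hval y, (memKp y).mp hy, LinearMap.map_smulₛₗ, Complex.conj_I, neg_smul]
  have bwd : ∀ y : (A†).domain, y ∈ Km → (⟨C (y : H), hmem y⟩ : (A†).domain) ∈ Kp := by
    intro y hy
    rw [memKp]
    show (A†) ⟨C (y : H), hmem y⟩ = Complex.I • C (y : H)
    rw [hval y, (memKm y).mp hy, map_neg, LinearMap.map_smulₛₗ, Complex.conj_I, neg_smul,
      neg_neg]
  -- the additive equivalence
  let j : Kp ≃+ Km :=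
    { toFun := fun y => ⟨⟨C ((y : (A†).domain) : H), hmem _⟩, fwd _ y.2⟩
      invFun := fun y => ⟨⟨C ((y : (A†).domain) : H), hmem _⟩, bwd _ y.2⟩
      left_inv := by
        intro y
        ext
        exact hC2 _
      right_inv := by
        intro y
        ext
        exact hC2 _
      map_add' := by
        intro y z
        ext
        exact map_add C _ _ }
  refine rank_eq_of_equiv_equiv (ZeroHom.mk (starRingEnd ℂ) (map_zero _)) j
    (Function.Involutive.bijective fun z => Complex.conj_conj z) ?_
  intro r m
  ext
  exact LinearMap.map_smulₛₗ C r _
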